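/- arXiv:1312.5654 — 4 statements merged into one kernel-verified Lean document; each statement's English description precedes it below -/
import Mathlib

section
/- Let G be a group acting faithfully by homeomorphisms on an infinite Hausdorff space X, and let N be a non-trivial normal subgroup of G. Then there exists a non-empty open subset U of X such that the commutator subgroup of G_(U) (the subgroup of elements of G acting trivially on X \ U) is contained in N. -/
/-!
Pick `g ∈ N` moving a point `p`, and a neighbourhood `U` of `p` with `g U ∩ U = ∅`.
For `a, b ∈ G_(U)` the conjugate `g b g⁻¹` is supported in `g U`, so it commutes with `a`.
Modulo `N` the element `g` is trivial, hence `⁅a, b⁆ ≡ ⁅a, g b g⁻¹⁆ = 1`.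
-/

/-- The subgroup of elements of `G` acting (via `φ`) trivially outside of `U`. -/
def fixingOutside {G X : Type*} [Group G] (φ : G →* Equiv.Perm X) (U : Set X) :
    Subgroup G where
  carrier := {g | ∀ x ∉ U, φ g x = x}
  one_mem' := by intro x _; simp
  mul_mem' := by
    intro a b ha hb x hx
    have h1 := hb x hx
    have h2 := ha x hx
    simp only [map_mul, Equiv.Perm.mul_apply, h1, h2]
  inv_mem' := by
    intro a ha x hx
    simp only [map_inv]
    exact Equiv.injective (φ a) (by rw [← Equiv.Perm.mul_apply, mul_inv_cancel, Equiv.Perm.one_apply, ha x hx])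

open scoped commutatorElement

theorem exists_isOpen_disjoint_image_of_apply_ne {X : Type*} [TopologicalSpace X] [T2Space X]
    {f : X → X} (hf : Continuous f) {p : X} (hp : f p ≠ p) :
    ∃ U : Set X, IsOpen U ∧ p ∈ U ∧ Disjoint U (f '' U) := by
  obtain ⟨W, V, hW, hV, hfpW, hpV, hWV⟩ := t2_separation hp
  refine ⟨V ∩ f ⁻¹' W, hV.inter (hW.preimage hf), ⟨hpV, hfpW⟩, ?_⟩
  exact hWV.symm.mono Set.inter_subset_left
    ((Set.image_mono Set.inter_subset_right).trans (Set.image_preimage_subset f W))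

theorem commutatorElement_mem_of_commute_conj {G : Type*} [Group G] {N : Subgroup G} [N.Normal]
    {g a b : G} (hg : g ∈ N) (hab : Commute a (g * b * g⁻¹)) : ⁅a, b⁆ ∈ N := by
  have hg1 : (g : G ⧸ N) = 1 := (QuotientGroup.eq_one_iff g).mpr hg
  rw [← QuotientGroup.eq_one_iff]
  calc ((⁅a, b⁆ : G) : G ⧸ N) = ((⁅a, g * b * g⁻¹⁆ : G) : G ⧸ N) := by
        simp only [commutatorElement_def, QuotientGroup.mk_mul, QuotientGroup.mk_inv, hg1]
        group
    _ = 1 := by rw [commutatorElement_eq_one_iff_commute.mpr hab, QuotientGroup.mk_one]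

section fixingOutside

variable {G X : Type*} [Group G] {φ : G →* Equiv.Perm X}

theorem conj_mem_fixingOutside {U : Set X} {b : G} (hb : b ∈ fixingOutside φ U) (g : G) :
    g * b * g⁻¹ ∈ fixingOutside φ (φ g '' U) := by
  intro x hx
  rw [Equiv.image_eq_preimage_symm] at hx
  have hfix : φ b ((φ g).symm x) = (φ g).symm x := hb _ hx
  simp only [map_mul, map_inv, Equiv.Perm.mul_apply, Equiv.Perm.inv_def, hfix,
    Equiv.apply_symm_apply]

theorem commute_of_mem_fixingOutside_of_disjoint (hφ : Function.Injective φ) {U V : Set X}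
    (hUV : Disjoint U V) {a b : G} (ha : a ∈ fixingOutside φ U) (hb : b ∈ fixingOutside φ V) :
    Commute a b := by
  have hperm : (φ a).Disjoint (φ b) := fun x ↦ by
    by_cases hxU : x ∈ U
    · exact Or.inr (hb x (hUV.notMem_of_mem_left hxU))
    · exact Or.inl (ha x hxU)
  exact hperm.commute.of_map hφ

end fixingOutside

theorem exists_open_commutator_le_of_normal_general
    {G X : Type*} [Group G] [TopologicalSpace X] [T2Space X]
    (φ : G →* Equiv.Perm X) (hfaithful : Function.Injective φ)
    (hcont : ∀ g : G, Continuous (φ g))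
    (N : Subgroup G) [N.Normal] (hN : N ≠ ⊥) :
    ∃ U : Set X, IsOpen U ∧ U.Nonempty ∧
      ⁅fixingOutside φ U, fixingOutside φ U⁆ ≤ N := by
  obtain ⟨g, hgN, hg1⟩ := N.bot_or_exists_ne_one.resolve_left hN
  obtain ⟨p, hp⟩ : ∃ p, φ g p ≠ p := by
    by_contra! h
    exact hg1 (hfaithful (Equiv.ext fun x ↦ by simpa using h x))
  obtain ⟨U, hUo, hpU, hdisj⟩ := exists_isOpen_disjoint_image_of_apply_ne (hcont g) hp
  refine ⟨U, hUo, ⟨p, hpU⟩, Subgroup.commutator_le.mpr fun a ha b hb ↦ ?_⟩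
  exact commutatorElement_mem_of_commute_conj hgN
    (commute_of_mem_fixingOutside_of_disjoint hfaithful hdisj ha (conj_mem_fixingOutside hb g))

/-- Lemma 4.2 (Lemma `lem:basic`): if a group `G` acts faithfully by homeomorphisms on an
infinite Hausdorff space `X`, then for every non-trivial normal subgroup `N` of `G` there is a
non-empty open set `U ⊆ X` such that the commutator subgroup of `G_(U)` is contained in `N`. -/
theorem exists_open_commutator_le_of_normal
    {G X : Type*} [Group G] [TopologicalSpace X] [T2Space X] [Infinite X]
    (φ : G →* Equiv.Perm X) (hfaithful : Function.Injective φ)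
    (hcont : ∀ g : G, Continuous (φ g))
    (N : Subgroup G) [N.Normal] (hN : N ≠ ⊥) :
    ∃ U : Set X, IsOpen U ∧ U.Nonempty ∧
      ⁅fixingOutside φ U, fixingOutside φ U⁆ ≤ N :=
  exists_open_commutator_le_of_normal_general φ hfaithful hcont N hN
end

section
/- Let X be a finite alphabet with d = |X| ≥ 2 elements. For a clopen subset U of the Cantor space X^ω, write U as a finite disjoint union of n cylinder sets v_i X^ω. Then the residue of n modulo d−1 is independent of the chosen decomposition. -/
/-- The cylinder set `vX^ω` of all infinite sequences beginning with the finite word `v`. -/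
def cylinder {X : Type*} (v : List X) : Set (ℕ → X) :=
  {w | ∀ i : Fin v.length, w i = v.get i}

/-!
Fix `N` at least as long as every word of both decompositions and count the words `w` of length
`N` with `wX^ω ⊆ U`. Each such cylinder lies in exactly one cylinder `vX^ω` of a decomposition,
namely the one with `v` a prefix of `w`, so the count equals `∑ d ^ (N - |v|)`. Since `d ≡ 1`
modulo `d - 1`, this sum is congruent to the number of pieces, whichever decomposition is used.
-/

open Finset

section

variable {X : Type*}

theorem cylinder_nonempty [Nonempty X] (v : List X) : (cylinder v).Nonempty := by
  inhabit X
  exact ⟨fun i => v.getD i default, fun i => by simp⟩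

theorem mem_cylinder_iff_prefix {x : ℕ → X} {v : List X} {N : ℕ} (hv : v.length ≤ N) :
    x ∈ cylinder v ↔ v <+: List.ofFn fun i : Fin N => x i := by
  rw [List.prefix_iff_eq_take, List.ext_get_iff]
  simp [cylinder, hv, eq_comm, Fin.forall_iff]

theorem mem_cylinder_ofFn_iff {x : ℕ → X} {N : ℕ} {w : Fin N → X} :
    x ∈ cylinder (List.ofFn w) ↔ (fun i : Fin N => x i) = w := by
  rw [mem_cylinder_iff_prefix List.length_ofFn.le]
  refine ⟨fun h => (List.ofFn_inj.1 (h.eq_of_length (by simp))).symm, ?_⟩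
  rintro rfl
  exact List.prefix_refl _

theorem prefix_ofFn_of_mem_cylinder {v : List X} {N : ℕ} {w : Fin N → X} (hv : v.length ≤ N)
    {x : ℕ → X} (hxw : x ∈ cylinder (List.ofFn w)) (hxv : x ∈ cylinder v) :
    v <+: List.ofFn w :=
  mem_cylinder_ofFn_iff.1 hxw ▸ (mem_cylinder_iff_prefix hv).1 hxv

theorem cylinder_subset_cylinder_of_prefix {v u : List X} (h : v <+: u) :
    cylinder u ⊆ cylinder v := fun _ hx =>
  (mem_cylinder_iff_prefix h.length_le).2 (h.trans ((mem_cylinder_iff_prefix le_rfl).1 hx))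

theorem nodup_of_pairwise_disjoint_cylinder [Nonempty X] {L : List (List X)}
    (hL : L.Pairwise fun v u => Disjoint (cylinder v) (cylinder u)) : L.Nodup :=
  hL.imp fun {v u} (hvu : Disjoint (cylinder v) (cylinder u)) (heq : v = u) =>
    (cylinder_nonempty v).ne_empty (disjoint_self.1 (heq ▸ hvu))

theorem List.sum_map_pow_modEq_length {α : Type*} (L : List α) {d : ℕ} (hd : 1 ≤ d)
    (f : α → ℕ) :
    (L.map fun a => d ^ f a).sum ≡ L.length [MOD d - 1] := by
  simpa using Nat.ModEq.listSum_map (l := L) (g := fun _ => 1) fun a _ => by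
    simpa using (Nat.modEq_sub hd).pow (f a)

theorem card_filter_prefix_ofFn [Fintype X] [DecidableEq X] {v : List X} {N : ℕ}
    (hv : v.length ≤ N) :
    #{w : Fin N → X | v <+: List.ofFn w} = Fintype.card X ^ (N - v.length) := by
  obtain ⟨n, rfl⟩ := Nat.exists_eq_add_of_le hv
  have hprefix (w : Fin (v.length + n) → X) :
      v <+: List.ofFn w ↔ (fun i => w (Fin.castAdd n i)) = v.get := by
    rw [← Fin.append_castAdd_natAdd (f := w), List.ofFn_fin_append]
    simp only [Fin.append_left]
    constructor
    · intro h
      rw [← List.ofFn_inj, List.ofFn_get]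
      exact ((List.prefix_of_prefix_length_le h (List.prefix_append _ _) (by simp)).eq_of_length
        (by simp)).symm
    · intro h
      rw [h, List.ofFn_get]
      exact List.prefix_append _ _
  suffices #{w : Fin (v.length + n) → X | v <+: List.ofFn w} = #(univ : Finset (Fin n → X)) by
    simpa using this
  refine card_nbij' (fun w j => w (Fin.natAdd _ j)) (Fin.append v.get) ?_ ?_ ?_ ?_
  · simp
  · intro u _
    exact mem_filter.2 ⟨mem_univ _, (hprefix _).2 (funext fun i => Fin.append_left _ _ i)⟩
  · intro w hw
    have hw : (fun i => w (Fin.castAdd n i)) = v.get := (hprefix w).1 (by simpa using hw)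
    conv_rhs => rw [← Fin.append_castAdd_natAdd (f := w), hw]
  · intro u _
    simp [Fin.append_right]

open scoped Classical in
theorem card_filter_cylinder_subset_eq_sum [Fintype X] [Nonempty X] {U : Set (ℕ → X)}
    {L : List (List X)} (hdisj : L.Pairwise fun v u => Disjoint (cylinder v) (cylinder u))
    (hcover : ⋃ v ∈ L, cylinder v = U) {N : ℕ} (hN : ∀ v ∈ L, v.length ≤ N) :
    #{w : Fin N → X | cylinder (List.ofFn w) ⊆ U} =
      (L.map fun v => Fintype.card X ^ (N - v.length)).sum := by
  have hsplit : ({w : Fin N → X | cylinder (List.ofFn w) ⊆ U} : Finset _) =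
      L.toFinset.biUnion fun v => {w | v <+: List.ofFn w} := by
    ext w
    simp only [mem_filter, mem_univ, true_and, mem_biUnion, List.mem_toFinset, ← hcover]
    constructor
    · intro hw
      obtain ⟨x, hx⟩ := cylinder_nonempty (List.ofFn w)
      obtain ⟨v, hv, hxv⟩ := Set.mem_iUnion₂.1 (hw hx)
      exact ⟨v, hv, prefix_ofFn_of_mem_cylinder (hN v hv) hx hxv⟩
    · rintro ⟨v, hv, hvw⟩
      exact (cylinder_subset_cylinder_of_prefix hvw).trans (Set.subset_biUnion_of_mem hv)
  have hpairwise : (L.toFinset : Set (List X)).PairwiseDisjoint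
      fun v => ({w : Fin N → X | v <+: List.ofFn w} : Finset _) := by
    intro v hv u hu hvu
    refine disjoint_filter.2 fun w _ hvw huw => ?_
    have : Std.Symm fun v u : List X => Disjoint (cylinder v) (cylinder u) :=
      ⟨fun _ _ h => h.symm⟩
    have hdisj' := hdisj.forall (List.mem_toFinset.1 hv) (List.mem_toFinset.1 hu) hvu
    obtain ⟨x, hx⟩ := cylinder_nonempty (List.ofFn w)
    exact hdisj'.ne_of_mem (cylinder_subset_cylinder_of_prefix hvw hx)
      (cylinder_subset_cylinder_of_prefix huw hx) rfl
  rw [hsplit, card_biUnion hpairwise,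
    List.sum_toFinset _ (nodup_of_pairwise_disjoint_cylinder hdisj)]
  exact congrArg List.sum (List.map_congr_left fun v hv => card_filter_prefix_ofFn (hN v hv))

open scoped Classical in
theorem card_filter_cylinder_subset_modEq_length [Fintype X] [Nonempty X] {U : Set (ℕ → X)}
    {L : List (List X)} (hdisj : L.Pairwise fun v u => Disjoint (cylinder v) (cylinder u))
    (hcover : ⋃ v ∈ L, cylinder v = U) {N : ℕ} (hN : ∀ v ∈ L, v.length ≤ N) :
    #{w : Fin N → X | cylinder (List.ofFn w) ⊆ U} ≡ L.length [MOD Fintype.card X - 1] :=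
  card_filter_cylinder_subset_eq_sum hdisj hcover hN ▸
    L.sum_map_pow_modEq_length Fintype.card_pos _

end

theorem card_decomposition_modEq_general
    {X : Type*} [Fintype X] (hd : 2 ≤ Fintype.card X)
    (U : Set (ℕ → X))
    (L₁ L₂ : List (List X))
    (hdisj₁ : L₁.Pairwise fun v u => Disjoint (cylinder v) (cylinder u))
    (hdisj₂ : L₂.Pairwise fun v u => Disjoint (cylinder v) (cylinder u))
    (hcover₁ : ⋃ v ∈ L₁, cylinder v = U)
    (hcover₂ : ⋃ v ∈ L₂, cylinder v = U) :
    L₁.length ≡ L₂.length [MOD Fintype.card X - 1] := by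
  have : Nonempty X := Fintype.card_pos_iff.1 (by omega)
  set N := ((L₁ ++ L₂).map List.length).sum
  have hN (v : List X) (hv : v ∈ L₁ ++ L₂) : v.length ≤ N :=
    List.le_sum_of_mem (List.mem_map_of_mem hv)
  have hN₁ : ∀ v ∈ L₁, v.length ≤ N := fun v hv => hN v (List.mem_append_left _ hv)
  have hN₂ : ∀ v ∈ L₂, v.length ≤ N := fun v hv => hN v (List.mem_append_right _ hv)
  exact (card_filter_cylinder_subset_modEq_length hdisj₁ hcover₁ hN₁).symm.trans
    (card_filter_cylinder_subset_modEq_length hdisj₂ hcover₂ hN₂)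

/-- Proposition 4.7 (first part): for a clopen subset `U` of the Cantor space `X^ω` over an
alphabet with `d ≥ 2` letters, the number of cylinders in any decomposition of `U` into a
finite disjoint union of cylinder sets is well defined modulo `d - 1`. -/
theorem card_decomposition_modEq
    {X : Type*} [Fintype X] [TopologicalSpace X] [DiscreteTopology X] (hd : 2 ≤ Fintype.card X)
    (U : Set (ℕ → X)) (hU : IsClopen U)
    (L₁ L₂ : List (List X))
    (hdisj₁ : L₁.Pairwise fun v u => Disjoint (cylinder v) (cylinder u))
    (hdisj₂ : L₂.Pairwise fun v u => Disjoint (cylinder v) (cylinder u))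
    (hcover₁ : ⋃ v ∈ L₁, cylinder v = U)
    (hcover₂ : ⋃ v ∈ L₂, cylinder v = U) :
    L₁.length ≡ L₂.length [MOD Fintype.card X - 1] :=
  card_decomposition_modEq_general hd U L₁ L₂ hdisj₁ hdisj₂ hcover₁ hcover₂
end

section
/- Let Φ be a G-biset (a set with commuting left and right G-actions) whose right action is free with finitely many orbits, and let X ⊆ Φ be a transversal of the right orbits. Then every element of Φ is uniquely expressible as x · g for x ∈ X and g ∈ G, and the map ψ sending g ∈ G to the permutation-with-labels determined by g · x = y · h defines a group homomorphism G → Sym(X) ⋉ G^X (with the wreath product multiplication). -/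
/-- A `G`-biset: a set with commuting left and right `G`-actions. -/
structure BisetStr (G : Type*) [Group G] (Φ : Type*) where
  /-- the left action -/
  l : G → Φ → Φ
  /-- the right action -/
  r : Φ → G → Φ
  l_one : ∀ a, l 1 a = a
  l_mul : ∀ g h a, l (g * h) a = l g (l h a)
  r_one : ∀ a, r a 1 = a
  r_mul : ∀ a g h, r a (g * h) = r (r a g) h
  comm : ∀ g a h, l g (r a h) = r (l g a) h

/-- The right action of a biset is free. -/
def BisetStr.RightFree {G Φ : Type*} [Group G] (B : BisetStr G Φ) : Prop :=
  ∀ a g, B.r a g = a → g = 1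

/-- `T` is a transversal of the orbits of the right action: every element lies in the right
orbit of exactly one element of `T`. -/
def BisetStr.IsTransversal {G Φ : Type*} [Group G] (B : BisetStr G Φ) (T : Set Φ) : Prop :=
  (∀ a : Φ, ∃ x ∈ T, ∃ g : G, a = B.r x g) ∧
    ∀ x ∈ T, ∀ y ∈ T, (∃ g : G, y = B.r x g) → x = y

/-!
Freeness of the right action and the transversal property make `(x, g) ↦ x · g` a bijection
`X × G → Φ`. Decomposing `g · x = y · h` therefore defines `ψ g x = (y, h)`, and the identity
`(g g') · x = g · (g' · x) = g · (y · h) = (g · y) · h` together with uniqueness of the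
decomposition yields the wreath-product cocycle rule; applied to `g⁻¹ g = 1` it also shows that
`x ↦ y` is a permutation of `X`.
-/

namespace BisetStr

variable {G Φ : Type*} [Group G] (B : BisetStr G Φ) {T : Set Φ}

theorem existsUnique_r_eq (hfree : B.RightFree) (hT : B.IsTransversal T) (a : Φ) :
    ∃! p : T × G, B.r (p.1 : Φ) p.2 = a := by
  obtain ⟨x, hx, g, rfl⟩ := hT.1 a
  refine ⟨(⟨x, hx⟩, g), rfl, ?_⟩
  rintro ⟨⟨y, hy⟩, h⟩ (hyh : B.r y h = B.r x g)
  have hy_eq : y = B.r x (g * h⁻¹) := by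
    rw [B.r_mul, ← hyh, ← B.r_mul, mul_inv_cancel, B.r_one]
  obtain rfl : x = y := hT.2 x hx y hy ⟨_, hy_eq⟩
  rw [mul_inv_eq_one.mp (hfree _ _ hy_eq.symm)]

noncomputable def decomp (hfree : B.RightFree) (hT : B.IsTransversal T) (a : Φ) : T × G :=
  (B.existsUnique_r_eq hfree hT a).exists.choose

variable (hfree : B.RightFree) (hT : B.IsTransversal T)

theorem r_decomp (a : Φ) : B.r (B.decomp hfree hT a).1 (B.decomp hfree hT a).2 = a :=
  (B.existsUnique_r_eq hfree hT a).exists.choose_spec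

theorem decomp_eq_of_r_eq {a : Φ} {p : T × G} (hp : B.r (p.1 : Φ) p.2 = a) :
    B.decomp hfree hT a = p :=
  (B.existsUnique_r_eq hfree hT a).unique (B.r_decomp hfree hT a) hp

/-- The wreath recursion `ψ g x = (y, h)` where `g · x = y · h`. -/
noncomputable def wreathRecursion (g : G) (x : T) : T × G :=
  B.decomp hfree hT (B.l g x)

theorem l_eq_r_wreathRecursion (g : G) (x : T) :
    B.l g x = B.r (B.wreathRecursion hfree hT g x).1 (B.wreathRecursion hfree hT g x).2 :=
  (B.r_decomp hfree hT _).symm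

theorem wreathRecursion_one (x : T) : B.wreathRecursion hfree hT 1 x = (x, 1) :=
  B.decomp_eq_of_r_eq hfree hT (by rw [B.r_one, B.l_one])

theorem wreathRecursion_mul (g h : G) (x : T) :
    B.wreathRecursion hfree hT (g * h) x =
      ((B.wreathRecursion hfree hT g (B.wreathRecursion hfree hT h x).1).1,
        (B.wreathRecursion hfree hT g (B.wreathRecursion hfree hT h x).1).2 *
          (B.wreathRecursion hfree hT h x).2) := by
  refine B.decomp_eq_of_r_eq hfree hT ?_
  rw [B.r_mul, ← l_eq_r_wreathRecursion, ← B.comm, ← l_eq_r_wreathRecursion, ← B.l_mul]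

theorem wreathRecursion_mul_fst (g h : G) (x : T) :
    (B.wreathRecursion hfree hT (g * h) x).1 =
      (B.wreathRecursion hfree hT g (B.wreathRecursion hfree hT h x).1).1 := by
  rw [wreathRecursion_mul]

theorem bijective_wreathRecursion_fst (g : G) :
    Function.Bijective fun x => (B.wreathRecursion hfree hT g x).1 := by
  have hinv : ∀ g₁ g₂ : G, g₁ * g₂ = 1 → Function.LeftInverse
      (fun x => (B.wreathRecursion hfree hT g₁ x).1) fun x => (B.wreathRecursion hfree hT g₂ x).1 :=
    fun g₁ g₂ h x => by
      beta_reduce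
      rw [← wreathRecursion_mul_fst, h, wreathRecursion_one]
  exact ⟨(hinv _ _ (inv_mul_cancel g)).injective, (hinv _ _ (mul_inv_cancel g)).surjective⟩

end BisetStr

theorem covering_biset_wreath_recursion_general
    {G Φ : Type*} [Group G] (B : BisetStr G Φ)
    (hfree : B.RightFree) (T : Set Φ) (hT : B.IsTransversal T) :
    (∀ a : Φ, ∃! p : T × G, B.r (p.1 : Φ) p.2 = a) ∧
      ∃ (σ : G → T → T) (sec : G → T → G),
        (∀ (g : G) (x : T), B.l g (x : Φ) = B.r (σ g x : Φ) (sec g x)) ∧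
        (∀ g : G, Function.Bijective (σ g)) ∧
        (∀ (g h : G) (x : T), σ (g * h) x = σ g (σ h x)) ∧
        (∀ (g h : G) (x : T), sec (g * h) x = sec g (σ h x) * sec h x) :=
  ⟨B.existsUnique_r_eq hfree hT, fun g x => (B.wreathRecursion hfree hT g x).1,
    fun g x => (B.wreathRecursion hfree hT g x).2, B.l_eq_r_wreathRecursion hfree hT,
    B.bijective_wreathRecursion_fst hfree hT,
    B.wreathRecursion_mul_fst hfree hT,
    fun g h x => (congrArg Prod.snd (B.wreathRecursion_mul hfree hT g h x) :)⟩

/-- For a covering `G`-biset `Φ` (free right action with finitely many orbits) with a right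
orbit transversal `X ⊆ Φ`: every element of `Φ` is uniquely of the form `x · g` with
`x ∈ X`, `g ∈ G`, and the wreath recursion `g · x = σ_g(x) · sec_g(x)` defines a group
homomorphism `G → Sym(X) ⋉ G^X`: `σ` is multiplicative into permutations of `X` and `sec`
satisfies the wreath-product multiplication rule. -/
theorem covering_biset_wreath_recursion
    {G Φ : Type*} [Group G] (B : BisetStr G Φ)
    (hfree : B.RightFree) (T : Set Φ) (hTfin : T.Finite) (hT : B.IsTransversal T) :
    (∀ a : Φ, ∃! p : T × G, B.r (p.1 : Φ) p.2 = a) ∧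
      ∃ (σ : G → T → T) (sec : G → T → G),
        (∀ (g : G) (x : T), B.l g (x : Φ) = B.r (σ g x : Φ) (sec g x)) ∧
        (∀ g : G, Function.Bijective (σ g)) ∧
        (∀ (g h : G) (x : T), σ (g * h) x = σ g (σ h x)) ∧
        (∀ (g h : G) (x : T), sec (g * h) x = sec g (σ h x) * sec h x) :=
  covering_biset_wreath_recursion_general B hfree T hT
end

section
/- Two left-infinite sequences …x₂x₁ and …y₂y₁ in X^{−ω} are asymptotically equivalent with respect to a contracting self-similar group G (i.e., there is a sequence g_n taking finitely many values in G with g_n(x_n…x₁) = y_n…y₁ for all n) if and only if there is a sequence h_n of elements of the nucleus N of G satisfying h_n(x_n) = y_n and h_n|_{x_n} = h_{n−1} for all n ≥ 1 (with h₀ arbitrary in N). -/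
/-!
Going down the Moore diagram: if `g_n(x_n…x₁) = y_n…y₁` with `g_n` in a finite set `F`, then
for `m ≥ n` the section of `g_m` at `x_m…x_{n+1}` maps `x_n…x₁` to `y_n…y₁`, and it lies in the
nucleus once `m - n` exceeds the contraction depth of every element of `F`. For fixed `n` these
sections take finitely many values, so a single ultrafilter on `m` selects consistent limits
`h_n`, and consecutive limits are related by `h_{n+1}|_{x_{n+1}} = h_n` because `|_{uv} = |_u|_v`.
Conversely, a nucleus path is itself a witness with `F = N`.
-/

/-- The finite word `x_n … x₂ x₁` determined by the first `n` letters of a left-infinite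
sequence `… x₂ x₁` (encoded as `x : ℕ → X` with `x k` the letter `x_{k+1}`). -/
def wordOf {X : Type*} (x : ℕ → X) (n : ℕ) : List X :=
  (List.range n).reverse.map x

open Filter

section

variable {G X : Type*}

/-- The word `x_{n+k} … x_{n+1}`. -/
def segmentOf (x : ℕ → X) (n k : ℕ) : List X :=
  ((List.range' n k).map x).reverse

theorem length_segmentOf (x : ℕ → X) (n k : ℕ) : (segmentOf x n k).length = k := by
  simp [segmentOf]

theorem segmentOf_succ (x : ℕ → X) (n k : ℕ) :
    segmentOf x n (k + 1) = segmentOf x (n + 1) k ++ [x n] := by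
  simp [segmentOf, List.range'_succ]

theorem wordOf_succ (x : ℕ → X) (n : ℕ) : wordOf x (n + 1) = x n :: wordOf x n := by
  simp [wordOf, List.range_succ]

theorem wordOf_add (x : ℕ → X) (n k : ℕ) : wordOf x (n + k) = segmentOf x n k ++ wordOf x n := by
  induction k with
  | zero => simp [segmentOf]
  | succ k ih =>
    rw [← Nat.add_assoc, wordOf_succ, ih]
    simp [segmentOf, List.range'_concat]

theorem exists_uniform_contraction_depth (sec : G → List X → G) {N F : Set G}
    (hNcontr : ∀ g : G, ∃ n : ℕ, ∀ v : List X, n ≤ v.length → sec g v ∈ N) (hF : F.Finite) :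
    ∃ B : ℕ, ∀ g ∈ F, ∀ v : List X, B ≤ v.length → sec g v ∈ N := by
  choose b hb using hNcontr
  obtain ⟨B, hB⟩ := (hF.image b).bddAbove
  exact ⟨B, fun g hg v hv => hb g v ((hB ⟨g, hg, rfl⟩).trans hv)⟩

section SelfSimilar

variable [Monoid G] (φ : G →* Equiv.Perm (List X)) (sec : G → List X → G)

theorem apply_nil (hlen : ∀ (g : G) (v : List X), (φ g v).length = v.length) (g : G) :
    φ g [] = [] :=
  List.eq_nil_of_length_eq_zero (hlen g [])

theorem sec_append (hfaithful : Function.Injective φ)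
    (hsec : ∀ (g : G) (v w : List X), φ g (v ++ w) = φ g v ++ φ (sec g v) w)
    (g : G) (u v : List X) : sec g (u ++ v) = sec (sec g u) v := by
  refine hfaithful (Equiv.ext fun w => ?_)
  have key := hsec g (u ++ v) w
  rw [List.append_assoc, hsec, hsec, hsec, List.append_assoc] at key
  exact (List.append_cancel_left (List.append_cancel_left key)).symm

theorem apply_append_eq_append (hlen : ∀ (g : G) (v : List X), (φ g v).length = v.length)
    (hsec : ∀ (g : G) (v w : List X), φ g (v ++ w) = φ g v ++ φ (sec g v) w)
    {g : G} {v w v' w' : List X} (h : φ g (v ++ w) = v' ++ w') (hv : v.length = v'.length) :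
    φ g v = v' ∧ φ (sec g v) w = w' := by
  rw [hsec] at h
  exact List.append_inj h (by rw [hlen, hv])

theorem apply_wordOf_of_path (hlen : ∀ (g : G) (v : List X), (φ g v).length = v.length)
    (hsec : ∀ (g : G) (v w : List X), φ g (v ++ w) = φ g v ++ φ (sec g v) w)
    {x y : ℕ → X} {h : ℕ → G}
    (hh : ∀ n, φ (h (n + 1)) [x n] = [y n] ∧ sec (h (n + 1)) [x n] = h n) (n : ℕ) :
    φ (h n) (wordOf x n) = wordOf y n := by
  induction n with
  | zero => exact apply_nil φ hlen _
  | succ n ih =>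
    rw [wordOf_succ, wordOf_succ, ← List.singleton_append, hsec, (hh n).1, (hh n).2, ih]
    rfl

theorem apply_sec_segmentOf (hlen : ∀ (g : G) (v : List X), (φ g v).length = v.length)
    (hsec : ∀ (g : G) (v w : List X), φ g (v ++ w) = φ g v ++ φ (sec g v) w)
    {g : G} {x y : ℕ → X} {n k : ℕ} (hg : φ g (wordOf x (n + k)) = wordOf y (n + k)) :
    φ (sec g (segmentOf x n k)) (wordOf x n) = wordOf y n := by
  rw [wordOf_add, wordOf_add] at hg
  exact (apply_append_eq_append φ sec hlen hsec hg (by rw [length_segmentOf, length_segmentOf])).2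

theorem exists_nucleus_path_of_asymptotic (hfaithful : Function.Injective φ)
    (hlen : ∀ (g : G) (v : List X), (φ g v).length = v.length)
    (hsec : ∀ (g : G) (v w : List X), φ g (v ++ w) = φ g v ++ φ (sec g v) w)
    {N F : Set G} (hNfin : N.Finite)
    (hNcontr : ∀ g : G, ∃ n : ℕ, ∀ v : List X, n ≤ v.length → sec g v ∈ N)
    (hF : F.Finite) {x y : ℕ → X} {g : ℕ → G} (hgF : ∀ n, g n ∈ F)
    (hg : ∀ n, φ (g n) (wordOf x n) = wordOf y n) :
    ∃ h : ℕ → G, (∀ n, h n ∈ N) ∧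
      ∀ n : ℕ, φ (h (n + 1)) [x n] = [y n] ∧ sec (h (n + 1)) [x n] = h n := by
  obtain ⟨B, hB⟩ := exists_uniform_contraction_depth sec hNcontr hF
  let S : ℕ → ℕ → G := fun n m => sec (g m) (segmentOf x n (m - n))
  let U : Ultrafilter ℕ := Ultrafilter.of atTop
  have hU : ∀ a, ∀ᶠ m in (U : Filter ℕ), a ≤ m := fun a =>
    Ultrafilter.of_le atTop (eventually_ge_atTop a)
  have hSN : ∀ n, ∀ᶠ m in (U : Filter ℕ), ∃ a ∈ N, S n m = a := fun n =>
    (hU (n + B)).mono fun m hm =>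
      ⟨S n m, hB _ (hgF m) _ (by rw [length_segmentOf]; omega), rfl⟩
  choose h hhN hhU using fun n => (Ultrafilter.eventually_exists_mem_iff hNfin).1 (hSN n)
  refine ⟨h, hhN, fun n => ?_⟩
  obtain ⟨m, hnm, hSn, hSn1⟩ := ((hU (n + 1)).and ((hhU n).and (hhU (n + 1)))).exists
  obtain ⟨k, rfl⟩ := Nat.exists_eq_add_of_le hnm
  have hk : n + 1 + k - n = k + 1 := by omega
  simp only [S, hk, Nat.add_sub_cancel_left] at hSn hSn1
  constructor
  · have hword := apply_sec_segmentOf φ sec hlen hsec (hg (n + 1 + k))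
    rw [hSn1, wordOf_succ, wordOf_succ] at hword
    exact (apply_append_eq_append φ sec hlen hsec (v := [x n]) (v' := [y n]) hword rfl).1
  · rw [← hSn1, ← hSn, ← sec_append φ sec hfaithful hsec, segmentOf_succ]

end SelfSimilar

end

theorem asymptotic_equivalence_iff_nucleus_path_general
    {G X : Type*} [Group G]
    (φ : G →* Equiv.Perm (List X)) (hfaithful : Function.Injective φ)
    (hlen : ∀ (g : G) (v : List X), (φ g v).length = v.length)
    (sec : G → List X → G)
    (hsec : ∀ (g : G) (v w : List X), φ g (v ++ w) = φ g v ++ φ (sec g v) w)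
    (N : Set G) (hNfin : N.Finite)
    (hNcontr : ∀ g : G, ∃ n : ℕ, ∀ v : List X, n ≤ v.length → sec g v ∈ N)
    (x y : ℕ → X) :
    (∃ F : Set G, F.Finite ∧ ∃ g : ℕ → G, (∀ n, g n ∈ F) ∧
        ∀ n, φ (g n) (wordOf x n) = wordOf y n) ↔
      (∃ h : ℕ → G, (∀ n, h n ∈ N) ∧
        ∀ n : ℕ, φ (h (n + 1)) [x n] = [y n] ∧ sec (h (n + 1)) [x n] = h n) := by
  constructor
  · rintro ⟨F, hF, g, hgF, hg⟩
    exact exists_nucleus_path_of_asymptotic φ sec hfaithful hlen hsec hNfin hNcontr hF hgF hg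
  · rintro ⟨h, hhN, hh⟩
    exact ⟨N, hNfin, h, hhN, apply_wordOf_of_path φ sec hlen hsec hh⟩

/-- Two left-infinite sequences `…x₂x₁` and `…y₂y₁` are asymptotically equivalent with
respect to a contracting self-similar group `G` (there is a sequence `g_n` taking finitely
many values with `g_n(x_n…x₁) = y_n…y₁` for all `n`) if and only if the equivalence is
witnessed by a left-infinite path in the Moore diagram of the nucleus `N`: a sequence
`h_n ∈ N` with `h_n(x_n) = y_n` and `h_n|_{x_n} = h_{n−1}`. -/
theorem asymptotic_equivalence_iff_nucleus_path
    {G X : Type*} [Group G] [Nonempty X]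
    (φ : G →* Equiv.Perm (List X)) (hfaithful : Function.Injective φ)
    (hlen : ∀ (g : G) (v : List X), (φ g v).length = v.length)
    (sec : G → List X → G)
    (hsec : ∀ (g : G) (v w : List X), φ g (v ++ w) = φ g v ++ φ (sec g v) w)
    (N : Set G) (hNfin : N.Finite)
    (hNcontr : ∀ g : G, ∃ n : ℕ, ∀ v : List X, n ≤ v.length → sec g v ∈ N)
    (hNmin : ∀ M : Set G, M.Finite →
      (∀ g : G, ∃ n : ℕ, ∀ v : List X, n ≤ v.length → sec g v ∈ M) → N ⊆ M)
    (x y : ℕ → X) :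
    (∃ F : Set G, F.Finite ∧ ∃ g : ℕ → G, (∀ n, g n ∈ F) ∧
        ∀ n, φ (g n) (wordOf x n) = wordOf y n) ↔
      (∃ h : ℕ → G, (∀ n, h n ∈ N) ∧
        ∀ n : ℕ, φ (h (n + 1)) [x n] = [y n] ∧ sec (h (n + 1)) [x n] = h n) :=
  asymptotic_equivalence_iff_nucleus_path_general φ hfaithful hlen sec hsec N hNfin hNcontr x y
end
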